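/- The number of s-decreasing trees for a weak composition s = (s_1, ..., s_n) equals the product (1+s_n)(1+s_n+s_{n-1})···(1+s_n+s_{n-1}+···+s_2), i.e. ∏_{i=1}^{n-1} (1 + s_{n-i+1} + s_{n-i+2} + ··· + s_n). -/

import Mathlib

namespace SPermutahedron

/-! ### Planar rooted trees and `s`-decreasing trees -/

/-- A planar rooted tree: either a leaf, or an internal node with a natural
number label and an ordered list of children. -/
inductive PTree where
  | leaf : PTree
  | node : ℕ → List PTree → PTree

mutual
  /-- The list of labels of the internal nodes of a planar tree. -/
  def labels : PTree → List ℕ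
    | .leaf => []
    | .node i cs => i :: labelsList cs
  def labelsList : List PTree → List ℕ
    | [] => []
    | t :: ts => labels t ++ labelsList ts
end

mutual
  /-- Local condition for an `s`-decreasing tree: node `i` has `s i + 1`
  children and every internal-node descendant of `i` has a label `< i`. -/
  def IsSDecAux (s : ℕ → ℕ) : PTree → Prop
    | .leaf => True
    | .node i cs => cs.length = s i + 1 ∧ (∀ j ∈ labelsList cs, j < i) ∧ IsSDecList s cs
  def IsSDecList (s : ℕ → ℕ) : List PTree → Prop
    | [] => True
    | t :: ts => IsSDecAux s t ∧ IsSDecList s ts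
end

/-- `T` is an `s`-decreasing tree on `n` internal nodes: its internal nodes are
labeled bijectively by `1, …, n`, node `i` has `s i + 1` children, and any
internal-node descendant `j` of a node `i` satisfies `j < i`. -/
def IsSDecTree (s : ℕ → ℕ) (n : ℕ) (T : PTree) : Prop :=
  IsSDecAux s T ∧ (labels T).Perm (List.range' 1 n)

/-!
In an `s`-decreasing tree on the labels `a, …, a + m`, the node `a` carries the smallest label,
so all its children are leaves. Pruning it to a leaf gives an `s`-decreasing tree on
`a + 1, …, a + m` with a marked leaf, and grafting a node `a` with `s a + 1` leaves back at the
marked leaf inverts this. A tree on a label set `L` has `1 + ∑_{r ∈ L} s r` leaves, so the number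
of trees is multiplied by `1 + s (a + 1) + ⋯ + s (a + m)` at each step.
-/

mutual
  def numLeaves : PTree → ℕ
    | .leaf => 1
    | .node _ cs => numLeavesList cs
  def numLeavesList : List PTree → ℕ
    | [] => 0
    | t :: ts => numLeaves t + numLeavesList ts
end

mutual
  def prune (a : ℕ) : PTree → PTree
    | .leaf => .leaf
    | .node i cs => if i = a then .leaf else .node i (pruneList a cs)
  def pruneList (a : ℕ) : List PTree → List PTree
    | [] => []
    | t :: ts => prune a t :: pruneList a ts
end

mutual
  /-- Replace the `k`-th leaf (counted from `0`, left to right) by a node labeled `a`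
  with `c` leaf children. -/
  def graft (a k c : ℕ) : PTree → PTree
    | .leaf => if k = 0 then .node a (List.replicate c .leaf) else .leaf
    | .node i cs => .node i (graftList a k c cs)
  def graftList (a k c : ℕ) : List PTree → List PTree
    | [] => []
    | t :: ts =>
      if k < numLeaves t then graft a k c t :: ts else t :: graftList a (k - numLeaves t) c ts
end

mutual
  /-- The position of the leaf that `prune a` puts in place of the node labeled `a`. -/
  def leafIndex (a : ℕ) : PTree → ℕ
    | .leaf => 0
    | .node i cs => if i = a then 0 else leafIndexList a cs
  def leafIndexList (a : ℕ) : List PTree → ℕ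
    | [] => 0
    | t :: ts => if a ∈ labels t then leafIndex a t else numLeaves (prune a t) + leafIndexList a ts
end

theorem eq_leaf_of_labels_eq_nil : ∀ {t : PTree}, labels t = [] → t = .leaf
  | .leaf, _ => rfl
  | .node i cs, h => by simp [labels] at h

theorem labelsList_replicate_leaf (c : ℕ) : labelsList (List.replicate c .leaf) = [] := by
  induction c with
  | zero => rfl
  | succ c ih => simp [List.replicate, labelsList, labels, ih]

theorem isSDecList_replicate_leaf (s : ℕ → ℕ) (c : ℕ) :
    IsSDecList s (List.replicate c .leaf) := by
  induction c with
  | zero => trivial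
  | succ c ih => exact ⟨trivial, ih⟩

theorem eq_replicate_leaf_of_labelsList_eq_nil :
    ∀ {cs : List PTree}, labelsList cs = [] → cs = List.replicate cs.length .leaf
  | [], _ => rfl
  | t :: ts, h => by
    simp only [labelsList, List.append_eq_nil_iff] at h
    rw [eq_leaf_of_labels_eq_nil h.1, List.length_cons, List.replicate_succ,
      ← eq_replicate_leaf_of_labelsList_eq_nil h.2]

mutual
theorem numLeaves_eq_one_add_sum (s : ℕ → ℕ) : ∀ {t : PTree}, IsSDecAux s t →
    numLeaves t = 1 + ((labels t).map s).sum
  | .leaf, _ => rfl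
  | .node i cs, ⟨hlen, _, hcs⟩ => by
    simp only [numLeaves, labels, List.map_cons, List.sum_cons,
      numLeavesList_eq_length_add_sum s hcs, hlen]
    omega
theorem numLeavesList_eq_length_add_sum (s : ℕ → ℕ) : ∀ {cs : List PTree}, IsSDecList s cs →
    numLeavesList cs = cs.length + ((labelsList cs).map s).sum
  | [], _ => rfl
  | t :: ts, ⟨ht, hts⟩ => by
    simp only [numLeavesList, labelsList, List.length_cons, List.map_append, List.sum_append,
      numLeaves_eq_one_add_sum s ht, numLeavesList_eq_length_add_sum s hts]
    omega
end

section Prune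

variable (a : ℕ)

mutual
theorem prune_of_not_mem : ∀ {t : PTree}, a ∉ labels t → prune a t = t
  | .leaf, _ => rfl
  | .node i cs, h => by
    simp only [labels, List.mem_cons, not_or] at h
    simp [prune, Ne.symm h.1, pruneList_of_not_mem h.2]
theorem pruneList_of_not_mem : ∀ {cs : List PTree}, a ∉ labelsList cs → pruneList a cs = cs
  | [], _ => rfl
  | t :: ts, h => by
    simp only [labelsList, List.mem_append, not_or] at h
    simp [pruneList, prune_of_not_mem h.1, pruneList_of_not_mem h.2]
end

theorem length_pruneList : ∀ cs : List PTree, (pruneList a cs).length = cs.length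
  | [] => rfl
  | t :: ts => by simp [pruneList, length_pruneList ts]

mutual
theorem labels_prune_subset : ∀ t : PTree, labels (prune a t) ⊆ labels t
  | .leaf => List.Subset.refl _
  | .node i cs => by
    simp only [prune]
    split
    · exact List.nil_subset _
    · exact List.cons_subset_cons i (labelsList_pruneList_subset cs)
theorem labelsList_pruneList_subset : ∀ cs : List PTree,
    labelsList (pruneList a cs) ⊆ labelsList cs
  | [] => List.Subset.refl _
  | t :: ts => fun _ hj => by
    simp only [pruneList, labelsList, List.mem_append] at hj ⊢
    exact hj.imp (labels_prune_subset t ·) (labelsList_pruneList_subset ts ·)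
end

variable (s : ℕ → ℕ)

mutual
theorem IsSDecAux.prune : ∀ {t : PTree}, IsSDecAux s t → IsSDecAux s (prune a t)
  | .leaf, _ => trivial
  | .node i cs, ⟨hlen, hlt, hcs⟩ => by
    simp only [SPermutahedron.prune]
    split
    · trivial
    · exact ⟨by rw [length_pruneList, hlen],
        fun j hj => hlt j (labelsList_pruneList_subset a cs hj),
        hcs.pruneList⟩
theorem IsSDecList.pruneList : ∀ {cs : List PTree}, IsSDecList s cs →
    IsSDecList s (pruneList a cs)
  | [], _ => trivial
  | _ :: _, ⟨ht, hts⟩ => ⟨ht.prune, hts.pruneList⟩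
end

end Prune

section Graft

variable (a c : ℕ)

theorem length_graftList (k : ℕ) : ∀ cs : List PTree, (graftList a k c cs).length = cs.length
  | [] => rfl
  | t :: ts => by
    simp only [graftList]
    split <;> simp [length_graftList _ ts]

mutual
theorem labels_graft_perm : ∀ {k : ℕ} {t : PTree}, k < numLeaves t →
    (labels (graft a k c t)).Perm (a :: labels t)
  | k, .leaf, h => by
    obtain rfl : k = 0 := by simpa [numLeaves] using h
    simp [graft, labels, labelsList_replicate_leaf]
  | _, .node i _, h =>
    ((labelsList_graftList_perm h).cons i).trans (List.Perm.swap a i _)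
theorem labelsList_graftList_perm : ∀ {k : ℕ} {cs : List PTree}, k < numLeavesList cs →
    (labelsList (graftList a k c cs)).Perm (a :: labelsList cs)
  | k, t :: ts, h => by
    simp only [graftList]
    split
    · next hk => exact (labels_graft_perm hk).append_right (labelsList ts)
    · next hk =>
      have hk' : k - numLeaves t < numLeavesList ts := by simp only [numLeavesList] at h; omega
      exact ((labelsList_graftList_perm hk').append_left (labels t)).trans List.perm_middle
end

variable (s : ℕ → ℕ)

mutual
theorem IsSDecAux.graft : ∀ {k : ℕ} {t : PTree}, IsSDecAux s t → (∀ j ∈ labels t, a < j) →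
    k < numLeaves t → IsSDecAux s (graft a k (s a + 1) t)
  | k, .leaf, _, _, _ => by
    simp only [SPermutahedron.graft]
    split
    · exact ⟨List.length_replicate, by simp [labelsList_replicate_leaf],
        isSDecList_replicate_leaf s _⟩
    · trivial
  | _, .node i cs, ⟨hlen, hlt, hcs⟩, hgt, hk => by
    refine ⟨by rw [length_graftList, hlen], fun j hj => ?_,
      hcs.graftList (fun j hj => hgt j (List.mem_cons_of_mem i hj)) hk⟩
    rcases List.mem_cons.1 ((labelsList_graftList_perm a _ hk).subset hj) with rfl | hj
    · exact hgt i List.mem_cons_self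
    · exact hlt j hj
theorem IsSDecList.graftList : ∀ {k : ℕ} {cs : List PTree}, IsSDecList s cs →
    (∀ j ∈ labelsList cs, a < j) → k < numLeavesList cs →
    IsSDecList s (graftList a k (s a + 1) cs)
  | k, t :: ts, ⟨ht, hts⟩, hgt, hk => by
    simp only [SPermutahedron.graftList]
    split
    · next h => exact ⟨ht.graft (fun j hj => hgt j (List.mem_append_left _ hj)) h, hts⟩
    · next h =>
      have hk' : k - numLeaves t < numLeavesList ts := by simp only [numLeavesList] at hk; omega
      exact ⟨ht, hts.graftList (fun j hj => hgt j (List.mem_append_right _ hj)) hk'⟩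
end

end Graft

section RoundTrip

variable (a : ℕ)

mutual
theorem leafIndex_lt : ∀ {t : PTree}, a ∈ labels t → leafIndex a t < numLeaves (prune a t)
  | .node i cs, h => by
    simp only [leafIndex, prune]
    split
    · simp [numLeaves]
    · next hne =>
      have hcs : a ∈ labelsList cs := (List.mem_cons.1 h).resolve_left (Ne.symm hne)
      simpa [numLeaves] using leafIndexList_lt hcs
theorem leafIndexList_lt : ∀ {cs : List PTree}, a ∈ labelsList cs →
    leafIndexList a cs < numLeavesList (pruneList a cs)
  | t :: ts, h => by
    simp only [leafIndexList, pruneList, numLeavesList]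
    split
    · next ha => have := leafIndex_lt ha; omega
    · next ha =>
      have := leafIndexList_lt ((List.mem_append.1 h).resolve_left ha)
      omega
end

variable (c : ℕ)

mutual
theorem prune_graft : ∀ {k : ℕ} {t : PTree}, a ∉ labels t → k < numLeaves t →
    prune a (graft a k c t) = t
  | k, .leaf, _, hk => by
    obtain rfl : k = 0 := by simpa [numLeaves] using hk
    simp [graft, prune]
  | _, .node i _, ha, hk => by
    simp only [labels, List.mem_cons, not_or] at ha
    simp only [graft, prune, if_neg (Ne.symm ha.1), pruneList_graftList ha.2 hk]
theorem pruneList_graftList : ∀ {k : ℕ} {cs : List PTree}, a ∉ labelsList cs →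
    k < numLeavesList cs → pruneList a (graftList a k c cs) = cs
  | k, t :: ts, ha, hk => by
    simp only [labelsList, List.mem_append, not_or] at ha
    simp only [graftList]
    split
    · next h => simp only [pruneList, prune_graft ha.1 h, pruneList_of_not_mem a ha.2]
    · next h =>
      have hk' : k - numLeaves t < numLeavesList ts := by simp only [numLeavesList] at hk; omega
      simp only [pruneList, prune_of_not_mem a ha.1, pruneList_graftList ha.2 hk']
end

mutual
theorem leafIndex_graft : ∀ {k : ℕ} {t : PTree}, a ∉ labels t → k < numLeaves t →
    leafIndex a (graft a k c t) = k
  | k, .leaf, _, hk => by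
    obtain rfl : k = 0 := by simpa [numLeaves] using hk
    simp [graft, leafIndex]
  | _, .node i _, ha, hk => by
    simp only [labels, List.mem_cons, not_or] at ha
    simp only [graft, leafIndex, if_neg (Ne.symm ha.1)]
    exact leafIndexList_graftList ha.2 hk
theorem leafIndexList_graftList : ∀ {k : ℕ} {cs : List PTree}, a ∉ labelsList cs →
    k < numLeavesList cs → leafIndexList a (graftList a k c cs) = k
  | k, t :: ts, ha, hk => by
    simp only [labelsList, List.mem_append, not_or] at ha
    simp only [graftList]
    split
    · next h =>
      have hmem : a ∈ labels (graft a k c t) :=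
        (labels_graft_perm a c h).mem_iff.2 List.mem_cons_self
      simp only [leafIndexList, if_pos hmem, leafIndex_graft ha.1 h]
    · next h =>
      have hk' : k - numLeaves t < numLeavesList ts := by simp only [numLeavesList] at hk; omega
      simp only [leafIndexList, if_neg ha.1, prune_of_not_mem a ha.1,
        leafIndexList_graftList ha.2 hk']
      omega
end

variable (s : ℕ → ℕ)

mutual
theorem graft_leafIndex_prune : ∀ {t : PTree}, IsSDecAux s t → (labels t).Nodup →
    a ∈ labels t → (∀ j ∈ labels t, a ≤ j) → graft a (leafIndex a t) (s a + 1) (prune a t) = t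
  | .node i cs, ⟨hlen, hlt, hcs⟩, hnd, hmem, hle => by
    by_cases hia : i = a
    · subst hia
      have hnil : labelsList cs = [] := List.eq_nil_iff_forall_not_mem.2 fun j hj =>
        (hlt j hj).not_ge (hle j (List.mem_cons_of_mem i hj))
      rw [eq_replicate_leaf_of_labelsList_eq_nil hnil, hlen]
      simp [graft, prune, leafIndex]
    · have hcs_mem : a ∈ labelsList cs := (List.mem_cons.1 hmem).resolve_left (Ne.symm hia)
      simp only [leafIndex, prune, if_neg hia, graft]
      rw [graftList_leafIndexList_pruneList hcs (List.nodup_cons.1 hnd).2 hcs_mem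
        fun j hj => hle j (List.mem_cons_of_mem i hj)]
theorem graftList_leafIndexList_pruneList : ∀ {cs : List PTree}, IsSDecList s cs →
    (labelsList cs).Nodup → a ∈ labelsList cs → (∀ j ∈ labelsList cs, a ≤ j) →
    graftList a (leafIndexList a cs) (s a + 1) (pruneList a cs) = cs
  | t :: ts, ⟨ht, hts⟩, hnd, hmem, hle => by
    obtain ⟨hnd_t, hnd_ts, hdisj⟩ := List.nodup_append.1 hnd
    have hle_t : ∀ j ∈ labels t, a ≤ j := fun j hj => hle j (List.mem_append_left _ hj)
    have hle_ts : ∀ j ∈ labelsList ts, a ≤ j := fun j hj => hle j (List.mem_append_right _ hj)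
    by_cases ha : a ∈ labels t
    · have hts_mem : a ∉ labelsList ts := fun h => hdisj a ha a h rfl
      simp only [leafIndexList, pruneList, if_pos ha, graftList, if_pos (leafIndex_lt a ha),
        graft_leafIndex_prune ht hnd_t ha hle_t, pruneList_of_not_mem a hts_mem]
    · have hts_mem : a ∈ labelsList ts := (List.mem_append.1 hmem).resolve_left ha
      simp only [leafIndexList, pruneList, if_neg ha, graftList, prune_of_not_mem a ha,
        Nat.add_sub_cancel_left, show ¬ numLeaves t + leafIndexList a ts < numLeaves t by omega,
        graftList_leafIndexList_pruneList hts hnd_ts hts_mem hle_ts, if_false]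
end

end RoundTrip

/-- `T` is an `s`-decreasing tree whose labels are `a, a + 1, …, a + m - 1`. -/
def IsSDecTreeOn (s : ℕ → ℕ) (a m : ℕ) (T : PTree) : Prop :=
  IsSDecAux s T ∧ (labels T).Perm (List.range' a m)

namespace IsSDecTreeOn

variable {s : ℕ → ℕ} {a m : ℕ} {T : PTree}

theorem numLeaves_eq (h : IsSDecTreeOn s a m T) :
    numLeaves T = 1 + ∑ r ∈ Finset.Ico a (a + m), s r := by
  rw [numLeaves_eq_one_add_sum s h.1, (h.2.map s).sum_eq, Nat.Ico_eq_range',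
    Nat.add_sub_cancel_left]
  rfl

theorem mem_labels (h : IsSDecTreeOn s a m T) {j : ℕ} : j ∈ labels T ↔ a ≤ j ∧ j < a + m := by
  rw [h.2.mem_iff, List.mem_range'_1]

theorem mem_labels_self (h : IsSDecTreeOn s a (m + 1) T) : a ∈ labels T :=
  h.mem_labels.2 (by omega)

theorem not_mem_labels_pred (h : IsSDecTreeOn s (a + 1) m T) : a ∉ labels T :=
  fun ha => by have := h.mem_labels.1 ha; omega

theorem graft_leafIndex_prune (h : IsSDecTreeOn s a (m + 1) T) :
    graft a (leafIndex a T) (s a + 1) (prune a T) = T :=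
  SPermutahedron.graft_leafIndex_prune a s h.1 (h.2.nodup_iff.2 List.nodup_range')
    h.mem_labels_self fun _ hj => (h.mem_labels.1 hj).1

theorem prune (h : IsSDecTreeOn s a (m + 1) T) : IsSDecTreeOn s (a + 1) m (prune a T) := by
  refine ⟨h.1.prune a, List.Perm.cons_inv (a := a) ?_⟩
  have hperm := labels_graft_perm a (s a + 1) (leafIndex_lt a h.mem_labels_self)
  rw [h.graft_leafIndex_prune] at hperm
  exact hperm.symm.trans h.2

theorem graft (h : IsSDecTreeOn s (a + 1) m T) {k : ℕ} (hk : k < numLeaves T) :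
    IsSDecTreeOn s a (m + 1) (graft a k (s a + 1) T) :=
  ⟨h.1.graft a s (fun _ hj => (h.mem_labels.1 hj).1) hk,
    (labels_graft_perm a _ hk).trans (h.2.cons a)⟩

end IsSDecTreeOn

def isSDecTreeOnSuccEquiv (s : ℕ → ℕ) (a m : ℕ) :
    {T // IsSDecTreeOn s a (m + 1) T} ≃
      {T // IsSDecTreeOn s (a + 1) m T} × Fin (1 + ∑ r ∈ Finset.Ico (a + 1) (a + 1 + m), s r) where
  toFun T := (⟨prune a T, T.2.prune⟩,
    ⟨leafIndex a T, (leafIndex_lt a T.2.mem_labels_self).trans_eq T.2.prune.numLeaves_eq⟩)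
  invFun p := ⟨graft a p.2 (s a + 1) p.1, p.1.2.graft (p.2.2.trans_eq p.1.2.numLeaves_eq.symm)⟩
  left_inv T := Subtype.ext T.2.graft_leafIndex_prune
  right_inv p := by
    have hk := p.2.2.trans_eq p.1.2.numLeaves_eq.symm
    exact Prod.ext (Subtype.ext (prune_graft a _ p.1.2.not_mem_labels_pred hk))
      (Fin.ext (leafIndex_graft a _ p.1.2.not_mem_labels_pred hk))

theorem card_isSDecTreeOn_zero (s : ℕ → ℕ) (a : ℕ) : Nat.card {T // IsSDecTreeOn s a 0 T} = 1 := by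
  refine Nat.card_eq_one_iff_unique.2 ⟨⟨fun T T' => ?_⟩, ⟨⟨.leaf, trivial, .nil⟩⟩⟩
  rw [Subtype.ext_iff, eq_leaf_of_labels_eq_nil T.2.2.eq_nil,
    eq_leaf_of_labels_eq_nil T'.2.2.eq_nil]

/-- Each label `k` contributes one factor: the number of leaves of a tree on the larger labels,
i.e. the number of places where the node `k` can be grafted. -/
theorem card_isSDecTreeOn (s : ℕ → ℕ) (a m : ℕ) :
    Nat.card {T // IsSDecTreeOn s a m T} =
      ∏ k ∈ Finset.Ico a (a + m), (1 + ∑ r ∈ Finset.Ioo k (a + m), s r) := by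
  induction m generalizing a with
  | zero => simp [card_isSDecTreeOn_zero]
  | succ m ih =>
    rw [Nat.card_congr (isSDecTreeOnSuccEquiv s a m), Nat.card_prod, Nat.card_fin, ih,
      Finset.prod_eq_prod_Ico_succ_bot (show a < a + (m + 1) by omega), mul_comm,
      show a + 1 + m = a + (m + 1) by omega, Finset.Ico_add_one_left_eq_Ioo]

/-- (Formula (1) of Ceballos–Pons.) For a weak composition
`s = (s₁, …, sₙ)`, the number of `s`-decreasing trees is
`(1+sₙ)(1+sₙ+sₙ₋₁) ⋯ (1+sₙ+⋯+s₂) = ∏_{i=1}^{n-1} (1 + s_{n-i+1} + ⋯ + s_n)`. -/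
theorem card_sDecreasingTrees (n : ℕ) (s : ℕ → ℕ) :
    Nat.card {T : PTree // IsSDecTree s n T} =
      ∏ i ∈ Finset.Icc 1 (n - 1), (1 + ∑ r ∈ Finset.Icc (n - i + 1) n, s r) := by
  change Nat.card {T // IsSDecTreeOn s 1 n T} = _
  rw [card_isSDecTreeOn]
  cases n with
  | zero => rfl
  | succ n =>
    -- the largest label `n + 1` contributes the factor `1`; the others match under `k ↦ n + 1 - k`
    rw [show 1 + (n + 1) = n + 1 + 1 by omega, Finset.prod_Ico_succ_top (by omega)]
    simp only [Finset.Ioo_add_one_right_eq_Ioc, Finset.Icc_add_one_left_eq_Ioc, Finset.Ioc_self,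
      Finset.sum_empty, add_zero, mul_one, add_tsub_cancel_right]
    refine Finset.prod_nbij' (n + 1 - ·) (n + 1 - ·) ?_ ?_ ?_ ?_ ?_ <;> intro k hk <;>
      simp only [Finset.mem_Ico, Finset.mem_Icc] at hk
    · exact Finset.mem_Icc.2 (by omega)
    · exact Finset.mem_Ico.2 (by omega)
    · omega
    · omega
    · rw [Nat.sub_sub_self (by omega)]

end SPermutahedron
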